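/- arXiv:cond-mat/0410686 — 3 statements merged into one kernel-verified Lean document; each statement's English description precedes it below -/
import Mathlib

section
/- The Fortuin-Kasteleyn representation: for a finite graph G = (V, E), positive reals v_e for each edge e, and q ≥ 1 a natural number, the sum over spin configurations σ : V → {0,...,q-1} of the product over edges e = {i,j} of (1 + v_e·δ(σ_i,σ_j)) equals the sum over edge subsets X ⊆ E of (∏_{e ∈ X} v_e)·q^{N(X)}, where N(X) is the number of connected components of the graph (V, X) (counting isolated vertices as components). -/
/-!
Expanding `∏_{e ∈ E} (1 + v_e δ_e)` over subsets `X ⊆ E` and exchanging the sums, the coefficient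
of `∏_{e ∈ X} v_e` is the number of spin configurations that are constant along every edge of `X`.
Such configurations are exactly the functions on the connected components of `(V, X)`, so there
are `q ^ N(X)` of them.
-/

open Finset

namespace SimpleGraph

variable {V : Type*} {G : SimpleGraph V} {α : Type*}

theorem Reachable.apply_eq_of_forall_adj {f : V → α} (hf : ∀ ⦃a b⦄, G.Adj a b → f a = f b)
    {a b : V} (h : G.Reachable a b) : f a = f b := by
  obtain ⟨w⟩ := h
  induction w with
  | nil => rfl
  | cons hadj _ ih => exact (hf hadj).trans ih

variable (G α) in
def constOnAdjEquiv :
    {f : V → α // ∀ ⦃a b⦄, G.Adj a b → f a = f b} ≃ (G.ConnectedComponent → α) where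
  toFun f := Quot.lift f.1 fun _ _ h => h.apply_eq_of_forall_adj f.2
  invFun g := ⟨g ∘ G.connectedComponentMk,
    fun _ _ h => congrArg g (ConnectedComponent.connectedComponentMk_eq_of_adj h)⟩
  left_inv _ := rfl
  right_inv _ := funext (ConnectedComponent.ind fun _ => rfl)

theorem forall_mem_isDiag_map_iff {X : Set (Sym2 V)} {f : V → α} :
    (∀ e ∈ X, (e.map f).IsDiag) ↔ ∀ ⦃a b⦄, (fromEdgeSet X).Adj a b → f a = f b := by
  constructor
  · rintro h a b ⟨hab, -⟩
    simpa using h _ hab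
  · intro h e he
    induction e using Sym2.ind with
    | _ a b =>
      by_cases hab : a = b
      · simp [hab]
      · simpa using h ⟨he, hab⟩

theorem natCard_forall_isDiag_map [Finite V] (X : Set (Sym2 V)) :
    Nat.card {f : V → α // ∀ e ∈ X, (e.map f).IsDiag} =
      Nat.card α ^ Nat.card (fromEdgeSet X).ConnectedComponent := by
  rw [← Nat.card_fun]
  exact Nat.card_congr <| (Equiv.subtypeEquivRight fun _ => forall_mem_isDiag_map_iff).trans
    (constOnAdjEquiv _ α)

theorem sum_prod_boole_isDiag_map [Fintype V] [DecidableEq V] [Fintype α] [DecidableEq α]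
    {R : Type*} [CommSemiring R] (X : Finset (Sym2 V)) :
    ∑ f : V → α, ∏ e ∈ X, (if (e.map f).IsDiag then 1 else 0 : R) =
      Fintype.card α ^ Nat.card (fromEdgeSet (X : Set (Sym2 V))).ConnectedComponent := by
  rw [← Nat.card_eq_fintype_card, ← Nat.cast_pow, ← natCard_forall_isDiag_map,
    Nat.card_eq_fintype_card, Fintype.card_subtype, natCast_card_filter]
  simp_rw [prod_boole]
  -- the two sides differ only in the `Decidable` instance of `∀ e ∈ X, _`
  congr!

end SimpleGraph

theorem stmt_1_general {V : Type*} [Fintype V] [DecidableEq V]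
    (E : Finset (Sym2 V))
    (v : Sym2 V → ℝ) (q : ℕ) :
    ∑ σ : V → Fin q, ∏ e ∈ E, (1 + v e * (if (e.map σ).IsDiag then 1 else 0)) =
      ∑ X ∈ E.powerset, (∏ e ∈ X, v e) *
        (q : ℝ) ^ Nat.card (SimpleGraph.fromEdgeSet (X : Set (Sym2 V))).ConnectedComponent := by
  simp_rw [prod_one_add, prod_mul_distrib]
  rw [sum_comm]
  simp_rw [← mul_sum, SimpleGraph.sum_prod_boole_isDiag_map, Fintype.card_fin]

/-- The Fortuin–Kasteleyn representation: for a finite graph with edge set `E`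
(non-diagonal unordered pairs), positive edge weights `v`, and `q ≥ 1`,
`∑_σ ∏_{e={i,j}∈E} (1 + v_e δ(σᵢ,σⱼ)) = ∑_{X⊆E} (∏_{e∈X} v_e) q^{N(X)}`,
where `N(X)` is the number of connected components of the spanning subgraph
`(V, X)` (isolated vertices count as components). -/
theorem stmt_1 {V : Type*} [Fintype V] [DecidableEq V]
    (E : Finset (Sym2 V)) (hE : ∀ e ∈ E, ¬ e.IsDiag)
    (v : Sym2 V → ℝ) (hv : ∀ e ∈ E, 0 < v e) (q : ℕ) (hq : 1 ≤ q) :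
    ∑ σ : V → Fin q, ∏ e ∈ E, (1 + v e * (if (e.map σ).IsDiag then 1 else 0)) =
      ∑ X ∈ E.powerset, (∏ e ∈ X, v e) *
        (q : ℝ) ^ Nat.card (SimpleGraph.fromEdgeSet (X : Set (Sym2 V))).ConnectedComponent :=
  stmt_1_general E v q
end

section
/- For any finite connected nonempty set of bonds γ (edges of the lattice Z^d, d ≥ 1), the inequality |γ|/d - |S(γ)| + 1 ≤ 0 holds, where |γ| is the number of bonds of γ and S(γ) is the set of endpoints of bonds of γ. -/
abbrev Vd (d : ℕ) := Fin d → ℤ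

/-- Endpoints of an unordered pair as a `Finset`. -/
def Sym2.endFinset {V : Type*} [DecidableEq V] (e : Sym2 V) : Finset V :=
  Sym2.lift ⟨fun a b => ({a, b} : Finset V), fun a b => Finset.pair_comm a b⟩ e

/-- Nearest-neighbor bond of `ℤ^d`. -/
def IsBond {d : ℕ} (e : Sym2 (Vd d)) : Prop :=
  ∃ x y : Vd d, e = s(x, y) ∧ (∑ i, |x i - y i|) = 1

/-- Vertex set of a finite set of bonds. -/
def bondVerts {d : ℕ} (γ : Finset (Sym2 (Vd d))) : Finset (Vd d) :=
  γ.biUnion Sym2.endFinset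

/-- An edge set is connected if any two of its endpoints are joined by a path
using only edges of `γ`. -/
def EdgeConnected {d : ℕ} (γ : Finset (Sym2 (Vd d))) : Prop :=
  ∀ x ∈ bondVerts γ, ∀ y ∈ bondVerts γ,
    (SimpleGraph.fromEdgeSet (γ : Set (Sym2 (Vd d)))).Reachable x y

/-!
Every bond of `γ` has the form `{x, x + eᵢ}`, so it is determined by its direction `i` and its
lower endpoint `x ∈ S(γ)`. The lower endpoint is never a maximal vertex of `S(γ)` for the
coordinatewise order, hence `|γ| ≤ d (|S(γ)| - 1)`.
-/

open Finset Function

lemma exists_eq_one_of_sum_eq_one {ι : Type*} [DecidableEq ι] {s : Finset ι} {f : ι → ℤ}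
    (hf : ∀ i ∈ s, 0 ≤ f i) (h : ∑ i ∈ s, f i = 1) :
    ∃ i ∈ s, f i = 1 ∧ ∀ j ∈ s, j ≠ i → f j = 0 := by
  obtain ⟨i, hi, hi0⟩ := exists_ne_zero_of_sum_ne_zero (h.trans_ne one_ne_zero)
  have hsplit := (add_sum_erase s f hi).trans h
  have hrest : 0 ≤ ∑ j ∈ s.erase i, f j := sum_nonneg fun j hj => hf j (mem_of_mem_erase hj)
  have hfi : f i = 1 := by have := hf i hi; omega
  refine ⟨i, hi, hfi, fun j hj hji => ?_⟩
  exact (sum_eq_zero_iff_of_nonneg fun k hk => hf k (mem_of_mem_erase hk)).mp (by omega) j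
    (mem_erase.mpr ⟨hji, hj⟩)

lemma IsBond.exists_eq_update {d : ℕ} {e : Sym2 (Vd d)} (h : IsBond e) :
    ∃ (i : Fin d) (x : Vd d), e = s(x, update x i (x i + 1)) := by
  obtain ⟨x, y, rfl, hsum⟩ := h
  obtain ⟨i, -, hi, hrest⟩ :=
    exists_eq_one_of_sum_eq_one (fun j _ => abs_nonneg (x j - y j)) hsum
  have heq : ∀ j ≠ i, x j = y j := fun j hj =>
    sub_eq_zero.mp (abs_eq_zero.mp (hrest j (mem_univ j) hj))
  rcases (abs_eq zero_le_one).mp hi with hxy | hxy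
  · refine ⟨i, y, ?_⟩
    rw [Sym2.eq_swap]
    congr
    ext j
    rcases eq_or_ne j i with rfl | hj
    · rw [update_self]; omega
    · rw [update_of_ne hj, heq j hj]
  · refine ⟨i, x, ?_⟩
    congr
    ext j
    rcases eq_or_ne j i with rfl | hj
    · rw [update_self]; omega
    · rw [update_of_ne hj, heq j hj]

lemma mem_bondVerts {d : ℕ} {γ : Finset (Sym2 (Vd d))} {e : Sym2 (Vd d)} (he : e ∈ γ)
    {x : Vd d} (hx : x ∈ e) : x ∈ bondVerts γ := by
  refine mem_biUnion.mpr ⟨e, he, ?_⟩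
  induction e using Sym2.ind with
  | h a b => simpa [Sym2.endFinset] using hx

lemma bondVerts_nonempty {d : ℕ} {γ : Finset (Sym2 (Vd d))} (hne : γ.Nonempty) :
    (bondVerts γ).Nonempty := by
  obtain ⟨e, he⟩ := hne
  exact ⟨_, mem_bondVerts he (Sym2.out_fst_mem e)⟩

lemma subset_image_of_isBond {d : ℕ} {γ : Finset (Sym2 (Vd d))} (hb : ∀ e ∈ γ, IsBond e)
    {v : Vd d} (hv : Maximal (· ∈ bondVerts γ) v) :
    γ ⊆ (univ ×ˢ (bondVerts γ).erase v).image
      fun p : Fin d × Vd d => s(p.2, update p.2 p.1 (p.2 p.1 + 1)) := by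
  intro e he
  obtain ⟨i, x, rfl⟩ := (hb _ he).exists_eq_update
  have hx := mem_bondVerts he (Sym2.mem_mk_left _ _)
  have hy := mem_bondVerts he (Sym2.mem_mk_right _ _)
  have hxv : x ≠ v := by
    rintro rfl
    exact hv.not_gt hy (lt_update_self_iff.mpr (lt_add_one _))
  exact mem_image.mpr ⟨(i, x), by simp [hx, hxv], rfl⟩

lemma card_add_le_mul_card_bondVerts {d : ℕ} {γ : Finset (Sym2 (Vd d))} (hne : γ.Nonempty)
    (hb : ∀ e ∈ γ, IsBond e) : γ.card + d ≤ d * (bondVerts γ).card := by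
  obtain ⟨v, hv⟩ := Finset.exists_maximal (bondVerts_nonempty hne)
  have hcount := (card_le_card (subset_image_of_isBond hb hv)).trans card_image_le
  rw [card_product, card_univ, Fintype.card_fin, card_erase_of_mem hv.prop] at hcount
  have hpos : 0 < (bondVerts γ).card := card_pos.mpr ⟨v, hv.prop⟩
  calc γ.card + d ≤ d * ((bondVerts γ).card - 1) + d := by omega
    _ = d * (bondVerts γ).card := by
      rw [Nat.mul_sub_one, Nat.sub_add_cancel (Nat.le_mul_of_pos_right d hpos)]

theorem stmt_2_general {d : ℕ} (γ : Finset (Sym2 (Vd d)))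
    (hne : γ.Nonempty) (hb : ∀ e ∈ γ, IsBond e) :
    (γ.card : ℝ) / d - (bondVerts γ).card + 1 ≤ 0 := by
  have hcard := card_add_le_mul_card_bondVerts hne hb
  have hd : (0 : ℝ) < d := by
    have := hne.card_pos
    exact_mod_cast Nat.pos_of_ne_zero fun h0 => by subst h0; omega
  rw [sub_add, sub_nonpos, div_le_iff₀ hd]
  have hcard' : (γ.card : ℝ) + d ≤ d * (bondVerts γ).card := by exact_mod_cast hcard
  linarith

/-- For any finite connected nonempty set of bonds `γ` of `ℤ^d` (`d ≥ 1`),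
`|γ|/d - |S(γ)| + 1 ≤ 0`. -/
theorem stmt_2 {d : ℕ} (hd : 1 ≤ d) (γ : Finset (Sym2 (Vd d)))
    (hne : γ.Nonempty) (hb : ∀ e ∈ γ, IsBond e) (hc : EdgeConnected γ) :
    (γ.card : ℝ) / d - (bondVerts γ).card + 1 ≤ 0 :=
  stmt_2_general γ hne hb
end

section
/- In the ground-state diagram of the formal Hamiltonian H(X) = -β_s|X_s| - β_b|X_b| + |S(X)| - C(X) on bond configurations of the semi-infinite lattice L = Z^{d-1} × Z^+, the empty configuration X^f = ∅ is a ground state whenever β_b < 1/d and β_s < 1/(d-1): for any configuration Y differing from ∅ on finitely many bonds, H(Y|∅) = H(Y) - H(∅) ≥ 0. -/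
/-- Site of the semi-infinite lattice `𝕃 = ℤ^{d-1} × ℤ⁺`. -/
abbrev SILSite (d : ℕ) := (Fin (d - 1) → ℤ) × ℕ

/-- Nearest-neighbor bond of the semi-infinite lattice. -/
def IsSILBond {d : ℕ} (e : Sym2 (SILSite d)) : Prop :=
  ∃ x y : SILSite d, e = s(x, y) ∧
    (∑ i, |x.1 i - y.1 i|) + |(x.2 : ℤ) - (y.2 : ℤ)| = 1

/-- Vertex set `S(Y)` of a finite set of bonds. -/
def silVerts {d : ℕ} (Y : Finset (Sym2 (SILSite d))) : Finset (SILSite d) :=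
  Y.biUnion Sym2.endFinset

/-- The number `C(Y)` of connected components of a finite bond configuration
(isolated sites are not counted): the number of classes of bonds of `Y` under the
equivalence generated by "sharing an endpoint". -/
noncomputable def numComp {d : ℕ} (Y : Finset (Sym2 (SILSite d))) : ℕ :=
  Nat.card (Quot (fun e f : {e // e ∈ Y} => ∃ x, x ∈ e.1 ∧ x ∈ f.1))

/-!
Orient every bond towards its endpoint of smaller rank, where the rank is led by the tilt
`∑ i, x.1 i - x.2` of a site. Every bond then hangs from its lower endpoint, and a site has at
most `d` bonds hanging from it: the `d - 1` horizontal steps `+eᵢ` and the vertical step down.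
A site of the boundary layer has only the `d - 1` horizontal ones, and these are surface bonds.
Weighting surface bonds by `1/(d-1)` and bulk bonds by `1/d`, the bonds hanging from any site weigh
at most `1`, and the rank-maximal site of each connected component carries no bond at all. Summing
over sites gives `|Y_s|/(d-1) + |Y_b|/d ≤ |S(Y)| - C(Y)`, and the bounds on `β_s, β_b` finish.
-/

open Finset

namespace Sym2

variable {V α : Type*} [LinearOrder α]

theorem mem_endFinset [DecidableEq V] {x : V} {e : Sym2 V} : x ∈ e.endFinset ↔ x ∈ e := by
  induction e using Sym2.ind with
  | _ a b => simp [endFinset]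

def lowEnd (e : Sym2 V) (rank : V ↪ α) : V :=
  Sym2.lift ⟨fun x y => if rank x ≤ rank y then x else y, fun x y => by
    rcases lt_trichotomy (rank x) (rank y) with h | h | h
    · simp [h.le, h.not_ge]
    · rw [rank.injective h]
    · simp [h.le, h.not_ge]⟩ e

theorem lowEnd_mk (rank : V ↪ α) (x y : V) :
    s(x, y).lowEnd rank = if rank x ≤ rank y then x else y := rfl

theorem lowEnd_mem (rank : V ↪ α) (e : Sym2 V) : e.lowEnd rank ∈ e := by
  induction e using Sym2.ind with
  | _ x y => rw [lowEnd_mk]; split <;> simp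

theorem exists_eq_mk_lowEnd (rank : V ↪ α) {e : Sym2 V} (he : ¬e.IsDiag) :
    ∃ u, e = s(e.lowEnd rank, u) ∧ rank (e.lowEnd rank) < rank u := by
  induction e using Sym2.ind with
  | _ x y =>
    have hxy : rank x ≠ rank y := rank.injective.ne (mk_isDiag_iff.not.1 he)
    rw [lowEnd_mk]
    split_ifs with h
    · exact ⟨y, rfl, lt_of_le_of_ne h hxy⟩
    · exact ⟨x, Sym2.eq_swap, lt_of_not_ge h⟩

end Sym2

theorem mem_silVerts {d : ℕ} {Y : Finset (Sym2 (SILSite d))} {x : SILSite d} :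
    x ∈ silVerts Y ↔ ∃ e ∈ Y, x ∈ e := by
  simp [silVerts, Sym2.mem_endFinset]

def lowFiber {V α : Type*} [DecidableEq V] [LinearOrder α] (rank : V ↪ α) (Y : Finset (Sym2 V))
    (v : V) : Finset (Sym2 V) :=
  {e ∈ Y | e.lowEnd rank = v}

theorem mem_of_mem_lowFiber {V α : Type*} [DecidableEq V] [LinearOrder α] {rank : V ↪ α}
    {Y : Finset (Sym2 V)} {v : V} {e : Sym2 V} (he : e ∈ lowFiber rank Y v) : v ∈ e :=
  (mem_filter.1 he).2 ▸ e.lowEnd_mem rank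

section Components

variable {d : ℕ} {α : Type*} [LinearOrder α] (rank : SILSite d ↪ α) {Y : Finset (Sym2 (SILSite d))}

/-- `T` consists of the rank-maximal sites of the connected components. -/
theorem exists_subset_silVerts_card_eq_numComp (hY : ∀ e ∈ Y, ¬e.IsDiag) :
    ∃ T ⊆ silVerts Y, T.card = numComp Y ∧ ∀ v ∈ T, lowFiber rank Y v = ∅ := by
  classical
  let r (e f : {e // e ∈ Y}) : Prop := ∃ x, x ∈ e.1 ∧ x ∈ f.1
  let : Fintype (Quot r) := Fintype.ofFinite _
  let verts (q : Quot r) : Finset (SILSite d) :=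
    {e ∈ Y.attach | Quot.mk r e = q}.biUnion fun e => e.1.endFinset
  have mem_verts {q : Quot r} {x : SILSite d} :
      x ∈ verts q ↔ ∃ e : {e // e ∈ Y}, Quot.mk r e = q ∧ x ∈ e.1 := by
    simp [verts, Sym2.mem_endFinset]
  have verts_nonempty (q : Quot r) : (verts q).Nonempty := by
    obtain ⟨e, rfl⟩ := q.exists_rep
    exact ⟨_, mem_verts.2 ⟨e, rfl, e.1.lowEnd_mem rank⟩⟩
  choose M hM hMmax using fun q => (verts q).exists_max_image rank (verts_nonempty q)
  have mk_eq_of_mem (q : Quot r) (e : {e // e ∈ Y}) (he : M q ∈ e.1) : Quot.mk r e = q := by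
    obtain ⟨f, hf, hqf⟩ := mem_verts.1 (hM q)
    exact hf ▸ Quot.sound ⟨M q, he, hqf⟩
  refine ⟨univ.image M, ?_, ?_, ?_⟩
  · refine image_subset_iff.2 fun q _ => ?_
    obtain ⟨e, -, he⟩ := mem_verts.1 (hM q)
    exact mem_silVerts.2 ⟨e.1, e.2, he⟩
  · have hM_inj : Function.Injective M := fun q q' hqq' => by
      obtain ⟨e, hq, he⟩ := mem_verts.1 (hM q)
      exact hq.symm.trans (mk_eq_of_mem q' e (hqq' ▸ he))
    rw [card_image_of_injective _ hM_inj, card_univ, numComp, Nat.card_eq_fintype_card]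
  · simp only [mem_image, mem_univ, true_and, forall_exists_index, forall_apply_eq_imp_iff]
    refine fun q => eq_empty_iff_forall_notMem.2 fun e he => ?_
    obtain ⟨heY, hlow⟩ := mem_filter.1 he
    obtain ⟨u, hu, hlt⟩ := Sym2.exists_eq_mk_lowEnd rank (hY e heY)
    rw [hlow] at hu hlt
    have hq := mk_eq_of_mem q ⟨e, heY⟩ (hu ▸ Sym2.mem_mk_left _ _)
    exact (hMmax q u (mem_verts.2 ⟨⟨e, heY⟩, hq, hu ▸ Sym2.mem_mk_right _ _⟩)).not_gt hlt

theorem sum_le_card_silVerts_sub_numComp (hY : ∀ e ∈ Y, ¬e.IsDiag) (w : Sym2 (SILSite d) → ℝ)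
    (hw : ∀ v, ∑ e ∈ lowFiber rank Y v, w e ≤ 1) :
    ∑ e ∈ Y, w e ≤ (silVerts Y).card - numComp Y := by
  obtain ⟨T, hTS, hT, hT_empty⟩ := exists_subset_silVerts_card_eq_numComp rank hY
  calc ∑ e ∈ Y, w e = ∑ v ∈ silVerts Y, ∑ e ∈ lowFiber rank Y v, w e :=
        (sum_fiberwise_of_maps_to (fun e he => mem_silVerts.2 ⟨e, he, e.lowEnd_mem rank⟩) w).symm
    _ = ∑ v ∈ silVerts Y \ T, ∑ e ∈ lowFiber rank Y v, w e := by
        rw [← sum_sdiff hTS, sum_eq_zero (s := T) fun v hv => by rw [hT_empty v hv, sum_empty], add_zero]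
    _ ≤ ∑ v ∈ silVerts Y \ T, 1 := sum_le_sum fun v _ => hw v
    _ = (silVerts Y).card - numComp Y := by
        rw [sum_const, nsmul_one, card_sdiff_of_subset hTS, Nat.cast_sub (card_le_card hTS), hT]

end Components

theorem exists_eq_update_of_sum_abs_sub_eq_one {ι : Type*} [Fintype ι] [DecidableEq ι]
    {f g : ι → ℤ} (h : ∑ i, |f i - g i| = 1) :
    ∃ i, g = Function.update f i (f i + 1) ∨ f = Function.update g i (g i + 1) := by
  obtain ⟨i, hi⟩ : ∃ i, f i ≠ g i := by
    by_contra! hfg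
    simp [hfg] at h
  have hsplit := add_sum_erase univ (fun j => |f j - g j|) (mem_univ i)
  have hi_pos : 1 ≤ |f i - g i| := Int.one_le_abs (sub_ne_zero.2 hi)
  have hrest_nonneg : 0 ≤ ∑ j ∈ univ.erase i, |f j - g j| := sum_nonneg fun j _ => abs_nonneg _
  have hrest (j : ι) (hj : j ≠ i) : f j = g j := by
    have := (sum_eq_zero_iff_of_nonneg fun j _ => abs_nonneg (f j - g j)).1 (by omega) j
      (mem_erase.2 ⟨hj, mem_univ j⟩)
    rwa [abs_eq_zero, sub_eq_zero] at this
  refine ⟨i, ?_⟩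
  rcases (abs_eq zero_le_one).1 (show |f i - g i| = 1 by omega) with hfg | hfg
  · right
    funext j
    rcases eq_or_ne j i with rfl | hj
    · rw [Function.update_self]; omega
    · rw [Function.update_of_ne hj, hrest j hj]
  · left
    funext j
    rcases eq_or_ne j i with rfl | hj
    · rw [Function.update_self]; omega
    · rw [Function.update_of_ne hj, hrest j hj]

theorem sum_le_one_of_card_le {ι : Type*} {s : Finset ι} {w : ι → ℝ} {k : ℕ} (hk : s.card ≤ k)
    (hw : ∀ e ∈ s, w e ≤ 1 / k) : ∑ e ∈ s, w e ≤ 1 :=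
  calc ∑ e ∈ s, w e ≤ s.card • (1 / k : ℝ) := sum_le_card_nsmul s w _ hw
    _ ≤ 1 := by
      rw [nsmul_eq_mul, mul_one_div]
      exact div_le_one_of_le₀ (by exact_mod_cast hk) (Nat.cast_nonneg k)

namespace SILSite

variable {d : ℕ}

/-- Sites are ranked first by the tilt; it decreases along an upward vertical step, so that no
bond hangs from a boundary site into the bulk. -/
def tilt (x : SILSite d) : ℤ := ∑ i, x.1 i - x.2

def shift (x : SILSite d) (i : Fin (d - 1)) : SILSite d :=
  (Function.update x.1 i (x.1 i + 1), x.2)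

def IsAscent (x y : SILSite d) : Prop :=
  (∃ i, y = shift x i) ∨ (y.1 = x.1 ∧ y.2 + 1 = x.2)

theorem tilt_of_isAscent {x y : SILSite d} (h : IsAscent x y) : tilt y = tilt x + 1 := by
  rcases h with ⟨i, rfl⟩ | ⟨h1, h2⟩
  · have := Finset.sum_update_of_mem (mem_univ i) x.1 (x.1 i + 1)
    simp only [shift, tilt, sdiff_singleton_eq_erase] at this ⊢
    rw [this, ← add_sum_erase univ x.1 (mem_univ i)]
    ring
  · simp only [tilt, h1]
    omega

theorem isAscent_or_isAscent_of_isSILBond {x y : SILSite d} (h : IsSILBond s(x, y)) :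
    IsAscent x y ∨ IsAscent y x := by
  suffices H : ∀ a b : SILSite d, ∑ i, |a.1 i - b.1 i| + |(a.2 : ℤ) - b.2| = 1 →
      IsAscent a b ∨ IsAscent b a by
    obtain ⟨a, b, hab, hdist⟩ := h
    rcases Sym2.eq_iff.1 hab with ⟨rfl, rfl⟩ | ⟨rfl, rfl⟩
    · exact H x y hdist
    · exact (H y x hdist).symm
  intro a b hdist
  have hsum_nonneg : 0 ≤ ∑ i, |a.1 i - b.1 i| := sum_nonneg fun i _ => abs_nonneg _
  by_cases h2 : a.2 = b.2
  · obtain ⟨i, hi | hi⟩ := exists_eq_update_of_sum_abs_sub_eq_one (f := a.1) (g := b.1)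
      (by simpa [h2] using hdist)
    · exact Or.inl (Or.inl ⟨i, Prod.ext hi h2.symm⟩)
    · exact Or.inr (Or.inl ⟨i, Prod.ext hi h2⟩)
  · have h2' : 1 ≤ |(a.2 : ℤ) - b.2| := Int.one_le_abs (sub_ne_zero.2 (by exact_mod_cast h2))
    have h1 : a.1 = b.1 := funext fun i => by
      have := (sum_eq_zero_iff_of_nonneg fun i _ => abs_nonneg (a.1 i - b.1 i)).1 (by omega) i
        (mem_univ i)
      rwa [abs_eq_zero, sub_eq_zero] at this
    rcases (abs_eq zero_le_one).1 (show |(a.2 : ℤ) - b.2| = 1 by omega) with h | h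
    · exact Or.inl (Or.inr ⟨h1.symm, by omega⟩)
    · exact Or.inr (Or.inr ⟨h1, by omega⟩)

theorem not_isDiag_of_isSILBond {e : Sym2 (SILSite d)} (h : IsSILBond e) : ¬e.IsDiag := by
  obtain ⟨x, y, rfl, hdist⟩ := h
  rw [Sym2.mk_isDiag_iff]
  rintro rfl
  simp at hdist

def rank : SILSite d ↪ ℤ ×ₗ ℕ where
  toFun x := toLex (tilt x, Encodable.encode x)
  inj' _ _ h := Encodable.encode_injective (congrArg (fun p => (ofLex p).2) h)

theorem tilt_le_of_rank_lt {x y : SILSite d} (h : rank x < rank y) : tilt x ≤ tilt y := by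
  rcases Prod.Lex.toLex_lt_toLex.1 h with h | ⟨h, -⟩
  exacts [h.le, h.le]

theorem exists_eq_mk_isAscent_of_mem_lowFiber {Y : Finset (Sym2 (SILSite d))}
    (hY : ∀ e ∈ Y, IsSILBond e) {x : SILSite d} {e : Sym2 (SILSite d)}
    (he : e ∈ lowFiber rank Y x) : ∃ y, e = s(x, y) ∧ IsAscent x y := by
  obtain ⟨heY, rfl⟩ := mem_filter.1 he
  obtain ⟨y, hy, hlt⟩ := Sym2.exists_eq_mk_lowEnd rank (not_isDiag_of_isSILBond (hY e heY))
  refine ⟨y, hy, (isAscent_or_isAscent_of_isSILBond (hy ▸ hY e heY)).resolve_right fun h => ?_⟩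
  have := tilt_of_isAscent h
  have := tilt_le_of_rank_lt hlt
  omega

end SILSite

namespace SILSite

variable {d : ℕ} {Y : Finset (Sym2 (SILSite d))}

theorem lowFiber_subset (hY : ∀ e ∈ Y, IsSILBond e) (x : SILSite d) :
    lowFiber rank Y x ⊆ insert s(x, (x.1, x.2 - 1)) (univ.image fun i => s(x, shift x i)) := by
  intro e he
  obtain ⟨y, rfl, ⟨i, rfl⟩ | ⟨h1, h2⟩⟩ := exists_eq_mk_isAscent_of_mem_lowFiber hY he
  · exact mem_insert_of_mem (mem_image_of_mem _ (mem_univ i))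
  · rw [show y = (x.1, x.2 - 1) from Prod.ext h1 (by omega)]
    exact mem_insert_self _ _

theorem lowFiber_subset_of_snd_eq_zero (hY : ∀ e ∈ Y, IsSILBond e) {x : SILSite d}
    (hx : x.2 = 0) : lowFiber rank Y x ⊆ univ.image fun i => s(x, shift x i) := by
  intro e he
  obtain ⟨y, rfl, ⟨i, rfl⟩ | ⟨-, h2⟩⟩ := exists_eq_mk_isAscent_of_mem_lowFiber hY he
  · exact mem_image_of_mem _ (mem_univ i)
  · omega

theorem card_lowFiber_le (hd : 1 ≤ d) (hY : ∀ e ∈ Y, IsSILBond e) (x : SILSite d) :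
    (lowFiber rank Y x).card ≤ d :=
  calc (lowFiber rank Y x).card
      ≤ (insert s(x, (x.1, x.2 - 1)) (univ.image fun i => s(x, shift x i))).card :=
        card_le_card (lowFiber_subset hY x)
    _ ≤ (univ.image fun i => s(x, shift x i)).card + 1 := card_insert_le _ _
    _ ≤ (d - 1) + 1 := by grw [card_image_le, card_univ, Fintype.card_fin]
    _ = d := Nat.sub_add_cancel hd

theorem card_lowFiber_le_of_snd_eq_zero (hY : ∀ e ∈ Y, IsSILBond e) {x : SILSite d}
    (hx : x.2 = 0) : (lowFiber rank Y x).card ≤ d - 1 :=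
  calc (lowFiber rank Y x).card ≤ (univ.image fun i => s(x, shift x i)).card :=
        card_le_card (lowFiber_subset_of_snd_eq_zero hY hx)
    _ ≤ d - 1 := by grw [card_image_le, card_univ, Fintype.card_fin]

theorem snd_eq_zero_of_mem_lowFiber (hY : ∀ e ∈ Y, IsSILBond e) {x : SILSite d} (hx : x.2 = 0)
    {e : Sym2 (SILSite d)} (he : e ∈ lowFiber rank Y x) : ∀ y ∈ e, y.2 = 0 := by
  obtain ⟨i, -, rfl⟩ := mem_image.1 (lowFiber_subset_of_snd_eq_zero hY hx he)
  intro y hy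
  rcases Sym2.mem_iff.1 hy with rfl | rfl
  exacts [hx, hx]

theorem sum_lowFiber_le_one (hd : 1 ≤ d) {Ys Yb : Finset (Sym2 (SILSite d))}
    (hY : ∀ e ∈ Y, IsSILBond e) (hsplit : Y ⊆ Ys ∪ Yb)
    (hYs : ∀ e ∈ Ys, ∀ x ∈ e, x.2 = 0) (hYb : ∀ e ∈ Yb, ∃ x ∈ e, x.2 ≠ 0) (x : SILSite d) :
    ∑ e ∈ lowFiber rank Y x, (if e ∈ Ys then 1 / ((d - 1 : ℕ) : ℝ) else 1 / d) ≤ 1 := by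
  by_cases hx : x.2 = 0
  · refine sum_le_one_of_card_le (card_lowFiber_le_of_snd_eq_zero hY hx) fun e he => ?_
    have heYs : e ∈ Ys := (mem_union.1 (hsplit (mem_filter.1 he).1)).resolve_right fun heYb => by
      obtain ⟨y, hy, hy0⟩ := hYb e heYb
      exact hy0 (snd_eq_zero_of_mem_lowFiber hY hx he y hy)
    rw [if_pos heYs]
  · refine sum_le_one_of_card_le (card_lowFiber_le hd hY x) fun e he => ?_
    rw [if_neg fun heYs => hx (hYs e heYs x (mem_of_mem_lowFiber he))]

end SILSite

/-- In region I of the ground-state diagram (`β_b < 1/d`, `β_s < 1/(d-1)`),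
the empty configuration is a ground state of the formal Hamiltonian
`H(X) = -β_s|X_s| - β_b|X_b| + |S(X)| - C(X)`: any configuration `Y` differing
from `∅` on finitely many bonds has `H(Y) - H(∅) = H(Y) ≥ 0`. -/
theorem stmt_12 (d : ℕ) (hd : 3 ≤ d) (βs βb : ℝ)
    (hβb : βb < 1 / d) (hβs : βs < 1 / ((d : ℝ) - 1))
    (Y Ys Yb : Finset (Sym2 (SILSite d)))
    (hbond : ∀ e ∈ Y, IsSILBond e)
    (hsplit : Y = Ys ∪ Yb) (hdisj : Disjoint Ys Yb)
    (hYs : ∀ e ∈ Ys, ∀ x ∈ e, x.2 = 0)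
    (hYb : ∀ e ∈ Yb, ∃ x ∈ e, x.2 ≠ 0) :
    0 ≤ -βs * Ys.card - βb * Yb.card + (silVerts Y).card - numComp Y := by
  have hd1 : 1 ≤ d := by omega
  have hcast : ((d - 1 : ℕ) : ℝ) = d - 1 := by rw [Nat.cast_sub hd1, Nat.cast_one]
  have hbound := sum_le_card_silVerts_sub_numComp SILSite.rank
    (fun e he => SILSite.not_isDiag_of_isSILBond (hbond e he)) _
    (SILSite.sum_lowFiber_le_one hd1 hbond hsplit.subset hYs hYb)
  have hweight : ∑ e ∈ Y, (if e ∈ Ys then 1 / ((d - 1 : ℕ) : ℝ) else 1 / d) =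
      Ys.card * (1 / ((d : ℝ) - 1)) + Yb.card * (1 / d) := by
    rw [hsplit, sum_union hdisj, sum_congr rfl fun e he => if_pos he,
      sum_congr rfl fun e he => if_neg (disjoint_right.1 hdisj he), sum_const, sum_const,
      nsmul_eq_mul, nsmul_eq_mul, hcast]
  have hs := mul_le_mul_of_nonneg_left hβs.le (Nat.cast_nonneg (α := ℝ) Ys.card)
  have hb := mul_le_mul_of_nonneg_left hβb.le (Nat.cast_nonneg (α := ℝ) Yb.card)
  linarith
end
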